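/- Let C(x) = (1-√(1-4x))/(2x). Then (1/(1-a_1x)^m)·C(a_2x²/(1-a_1x)²)^m = g(x)^m, where g is the unique power series with g(0)=1 satisfying a_2x²g² - (1-a_1x)g + 1 = 0, i.e., g(x) = (1 - a_1x - √((1-a_1x)² - 4a_2x²))/(2a_2x²). -/

import Mathlib

open PowerSeries

/-!
With `u = 1 - a₁x` and `w = a₂x²/u²`, both `C(w)` and `u g` are power-series roots of
`w y² - y + 1 = 0`. Since `w` has no constant term this quadratic has only one power-series root,
so `C(w) = u g`, and the `m`-th powers agree after multiplying by `u⁻ᵐ`.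
-/

/-- Substitution of the power series `g` (with zero constant term) into `f`. -/
noncomputable def pscomp (f g : PowerSeries ℚ) : PowerSeries ℚ :=
  PowerSeries.mk fun N => ∑ n ∈ Finset.range (N + 1), coeff n f * coeff N (g ^ n)

namespace PowerSeries

variable {R : Type*} [CommRing R]

lemma coeff_pow_eq_zero_of_constantCoeff_eq_zero {w : R⟦X⟧} (hw : constantCoeff w = 0)
    {n N : ℕ} (h : N < n) : coeff N (w ^ n) = 0 :=
  X_pow_dvd_iff.1 (pow_dvd_pow_of_dvd (X_dvd_iff.2 hw) n) N h

lemma X_mul_sq_sub_add_one_subst {w f : R⟦X⟧} (hw : constantCoeff w = 0)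
    (hf : X * f ^ 2 - f + 1 = 0) : w * f.subst w ^ 2 - f.subst w + 1 = 0 := by
  have hw' : HasSubst w := HasSubst.of_constantCoeff_zero' hw
  have hsubst := congrArg (substAlgHom hw' (R := R)) hf
  rwa [map_add, map_sub, map_mul, map_pow, map_one, map_zero, coe_substAlgHom,
    subst_X hw'] at hsubst

/-- Two solutions differ by a factor of `w (x + y) - 1`, a unit since its constant coefficient
is `-1`. -/
lemma eq_of_mul_sq_sub_add_one_eq_zero {w x y : R⟦X⟧} (hw : constantCoeff w = 0)
    (hx : w * x ^ 2 - x + 1 = 0) (hy : w * y ^ 2 - y + 1 = 0) : x = y := by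
  have hunit : IsUnit (w * (x + y) - 1) :=
    isUnit_iff_constantCoeff.2 (by simp [hw])
  have hfactor : (w * (x + y) - 1) * (x - y) = 0 := by linear_combination hx - hy
  exact sub_eq_zero.1 ((hunit.mul_right_eq_zero).1 hfactor)

end PowerSeries

lemma pscomp_eq_subst {w : ℚ⟦X⟧} (hw : constantCoeff w = 0) (f : ℚ⟦X⟧) :
    pscomp f w = f.subst w := by
  ext N
  rw [coeff_subst' (HasSubst.of_constantCoeff_zero' hw),
    finsum_eq_sum_of_support_subset (s := Finset.range (N + 1))]
  · simp [pscomp]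
  · intro d hd
    rw [Finset.coe_range, Set.mem_Iio, Nat.lt_succ_iff]
    by_contra! hNd
    exact hd (by simp [coeff_pow_eq_zero_of_constantCoeff_eq_zero hw hNd])

theorem stmt_14_general (a₁ a₂ : ℚ) (Cat g : PowerSeries ℚ)
    (hC : X * Cat ^ 2 - Cat + 1 = 0)
    (hg : C a₂ * X ^ 2 * g ^ 2 - (1 - C a₁ * X) * g + 1 = 0)
    (m : ℕ) :
    ((1 - C a₁ * X)⁻¹) ^ m *
      (pscomp Cat (C a₂ * X ^ 2 * ((1 - C a₁ * X)⁻¹) ^ 2)) ^ m = g ^ m := by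
  set u : ℚ⟦X⟧ := 1 - C a₁ * X
  have hu : u⁻¹ * u = 1 := PowerSeries.inv_mul_cancel u (by simp [u])
  set w : ℚ⟦X⟧ := C a₂ * X ^ 2 * u⁻¹ ^ 2
  have hw : constantCoeff w = 0 := by simp [w]
  have hug : w * (u * g) ^ 2 - u * g + 1 = 0 := by
    linear_combination (u⁻¹ * u + 1) * (C a₂ * X ^ 2 * g ^ 2) * hu + hg
  have hcomp : pscomp Cat w = u * g := by
    rw [pscomp_eq_subst hw]
    exact eq_of_mul_sq_sub_add_one_eq_zero hw (X_mul_sq_sub_add_one_subst hw hC) hug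
  rw [← mul_pow, hcomp, ← mul_assoc, hu, one_mul]

theorem stmt_14 (a₁ a₂ : ℚ) (Cat g : PowerSeries ℚ)
    (hC0 : constantCoeff Cat = 1) (hC : X * Cat ^ 2 - Cat + 1 = 0)
    (hg0 : constantCoeff g = 1)
    (hg : C a₂ * X ^ 2 * g ^ 2 - (1 - C a₁ * X) * g + 1 = 0)
    (m : ℕ) (hm : 1 ≤ m) :
    ((1 - C a₁ * X)⁻¹) ^ m *
      (pscomp Cat (C a₂ * X ^ 2 * ((1 - C a₁ * X)⁻¹) ^ 2)) ^ m = g ^ m :=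
  stmt_14_general a₁ a₂ Cat g hC hg m
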